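/- For all j_c > 0, γ > 0, every e ∈ ℝ³ with e ≠ 0, and all v, w ∈ ℝ³, one has |ψ_γ(e) v · w| ≤ 2 j_c γ |v| |w|. -/

import Mathlib

open scoped RealInnerProductSpace Topology

/-- Moreau-Yosida regularization of the max-function `x ↦ max{1, x}`. -/
noncomputable def maxReg (γ x : ℝ) : ℝ :=
  if 1 / (2 * γ) ≤ x - 1 then x
  else if x - 1 ≤ -(1 / (2 * γ)) then 1
  else 1 + γ / 2 * (x - 1 + 1 / (2 * γ)) ^ 2

abbrev E3 := EuclideanSpace ℝ (Fin 3)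

/-- The regularized dual-variable map `Λ_γ(e) = j_c γ e / max_γ{1, γ|e|}`. -/
noncomputable def Lam (jc γ : ℝ) (e : E3) : E3 :=
  (jc * γ / maxReg γ (γ * ‖e‖)) • e

/-- The coefficient `c_γ(e)` arising in the derivative of `Λ_γ`. -/
noncomputable def cReg (γ : ℝ) (e : E3) : ℝ :=
  if 1 + 1 / (2 * γ) ≤ γ * ‖e‖ then 1
  else if |γ * ‖e‖ - 1| < 1 / (2 * γ) then γ * (γ * ‖e‖ - 1 + 1 / (2 * γ))
  else 0

/-- The matrix `ψ_γ(e)` applied to a vector `v`, where `(e ⊗ Λ_γ(e)) v = (Λ_γ(e) ⬝ v) e`. -/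
noncomputable def psi (jc γ : ℝ) (e v : E3) : E3 :=
  (jc * γ / maxReg γ (γ * ‖e‖)) • v
    - ((γ * cReg γ e / (maxReg γ (γ * ‖e‖) * ‖e‖)) * ⟪Lam jc γ e, v⟫) • e

/-!
With `M = max_γ{1, γ|e|}`, `s = j_c γ / M` and `t = γ c_γ(e) / (M |e|)` one has
`ψ_γ(e) v · w = s (v · w) - s t (e · v)(e · w)`, so Cauchy–Schwarz bounds it by
`s (1 + t |e|²) |v| |w|`. Since `M ≥ 1`, `M ≥ γ|e|` and `0 ≤ c_γ(e) ≤ 1`, both `s ≤ j_c γ` and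
`t |e|² = c_γ(e) γ|e| / M ≤ 1`.
-/

lemma abs_inner_smul_sub_smul_inner_smul_le {F : Type*} [NormedAddCommGroup F]
    [InnerProductSpace ℝ F] {s t : ℝ} (hs : 0 ≤ s) (ht : 0 ≤ t) (e v w : F) :
    |⟪s • v - (t * ⟪s • e, v⟫) • e, w⟫| ≤ s * (1 + t * ‖e‖ ^ 2) * ‖v‖ * ‖w‖ := by
  have hvw := abs_real_inner_le_norm v w
  have hev := abs_real_inner_le_norm e v
  have hew := abs_real_inner_le_norm e w
  rw [inner_sub_left, real_inner_smul_left, real_inner_smul_left, real_inner_smul_left]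
  calc |s * ⟪v, w⟫ - t * (s * ⟪e, v⟫) * ⟪e, w⟫|
      ≤ s * |⟪v, w⟫| + t * s * (|⟪e, v⟫| * |⟪e, w⟫|) := by
        refine (abs_sub _ _).trans (le_of_eq ?_)
        rw [abs_mul, abs_mul, abs_mul, abs_mul, abs_of_nonneg hs, abs_of_nonneg ht]
        ring
    _ ≤ s * (‖v‖ * ‖w‖) + t * s * ((‖e‖ * ‖v‖) * (‖e‖ * ‖w‖)) := by gcongr
    _ = s * (1 + t * ‖e‖ ^ 2) * ‖v‖ * ‖w‖ := by ring

section Regularization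

variable {γ : ℝ} (hγ : 0 < γ)
include hγ

lemma one_le_maxReg (x : ℝ) : 1 ≤ maxReg γ x := by
  have : 0 < 1 / (2 * γ) := by positivity
  unfold maxReg
  split_ifs
  · linarith
  · exact le_rfl
  · nlinarith [sq_nonneg (x - 1 + 1 / (2 * γ))]

lemma le_maxReg (x : ℝ) : x ≤ maxReg γ x := by
  have : 0 < 1 / (2 * γ) := by positivity
  have hγ_half : γ * (1 / (2 * γ)) = 1 / 2 := by field_simp
  unfold maxReg
  split_ifs
  · exact le_rfl
  · linarith
  · nlinarith [sq_nonneg (γ * (x - 1 + 1 / (2 * γ)) - 1)]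

lemma cReg_nonneg (e : E3) : 0 ≤ cReg γ e := by
  have hγ_half : γ * (1 / (2 * γ)) = 1 / 2 := by field_simp
  unfold cReg
  split_ifs with _ h
  · exact zero_le_one
  · nlinarith [mul_lt_mul_of_pos_left (abs_lt.mp h).1 hγ]
  · exact le_rfl

lemma cReg_le_one (e : E3) : cReg γ e ≤ 1 := by
  have hγ_half : γ * (1 / (2 * γ)) = 1 / 2 := by field_simp
  unfold cReg
  split_ifs with _ h
  · exact le_rfl
  · nlinarith [mul_lt_mul_of_pos_left (abs_lt.mp h).2 hγ]
  · exact zero_le_one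

end Regularization

theorem psi_bound_general (jc γ : ℝ) (hjc : 0 < jc) (hγ : 0 < γ) (e : E3)
    (v w : E3) : |⟪psi jc γ e v, w⟫| ≤ 2 * jc * γ * ‖v‖ * ‖w‖ := by
  set M := maxReg γ (γ * ‖e‖)
  set t := γ * cReg γ e / (M * ‖e‖)
  have hM : 1 ≤ M := one_le_maxReg hγ _
  have hs : jc * γ / M ≤ jc * γ := div_le_self (by positivity) hM
  have ht₀ : 0 ≤ t := div_nonneg (mul_nonneg hγ.le (cReg_nonneg hγ e)) (by positivity)
  have ht : t * ‖e‖ ^ 2 ≤ 1 := by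
    rw [div_mul_eq_mul_div]
    refine div_le_one_of_le₀ ?_ (by positivity)
    calc γ * cReg γ e * ‖e‖ ^ 2 = cReg γ e * (γ * ‖e‖ * ‖e‖) := by ring
      _ ≤ 1 * (M * ‖e‖) := by
        gcongr
        exacts [cReg_le_one hγ e, le_maxReg hγ _]
      _ = M * ‖e‖ := one_mul _
  calc |⟪psi jc γ e v, w⟫| ≤ jc * γ / M * (1 + t * ‖e‖ ^ 2) * ‖v‖ * ‖w‖ :=
        abs_inner_smul_sub_smul_inner_smul_le (by positivity) ht₀ e v w
    _ ≤ jc * γ * (1 + 1) * ‖v‖ * ‖w‖ := by gcongr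
    _ = 2 * jc * γ * ‖v‖ * ‖w‖ := by ring

/-- Bilinear-form bound for `ψ_γ(e)`: `|ψ_γ(e) v ⬝ w| ≤ 2 j_c γ ‖v‖ ‖w‖` for e ≠ 0. -/
theorem psi_bound (jc γ : ℝ) (hjc : 0 < jc) (hγ : 0 < γ) (e : E3) (he : e ≠ 0)
    (v w : E3) : |⟪psi jc γ e v, w⟫| ≤ 2 * jc * γ * ‖v‖ * ‖w‖ :=
  psi_bound_general jc γ hjc hγ e v w
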